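/- arXiv:1508.02407 — 5 statements merged into one kernel-verified Lean document; each statement's English description precedes it below -/
import Mathlib

section
/- For any positive integers K_1,…,K_r, P and any real a ≥ 1, we have C(P-⌈aK_i⌉, K_j)/C(P, K_j) ≤ (C(P-K_i, K_j)/C(P, K_j))^a for all i,j = 1,…,r. -/
/-!
Writing `C(P - n, k) / C(P, k) = ∏_{t < k} (P - n - t) / (P - t)`, it suffices to compare the
factors one at a time. With `Q = P - t`, Bernoulli's inequality `(1 - m/Q)^a ≥ 1 - a m/Q` gives
`(Q - n) / Q ≤ ((Q - m) / Q)^a` as soon as `a m ≤ n`, and `n = ⌈a K_i⌉` is such a choice.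
-/

open Finset

theorem Nat.cast_descFactorial_eq_prod {R : Type*} [CommRing R] {n k : ℕ} (hk : k ≤ n) :
    (n.descFactorial k : R) = ∏ t ∈ range k, ((n : R) - t) := by
  rw [Nat.descFactorial_eq_prod_range, Nat.cast_prod]
  exact prod_congr rfl fun t ht => Nat.cast_sub (mem_range.mp ht |>.trans_le hk).le

theorem Nat.choose_div_choose_eq_prod {N P k : ℕ} (hkN : k ≤ N) (hkP : k ≤ P) :
    (N.choose k : ℝ) / P.choose k = ∏ t ∈ range k, ((N : ℝ) - t) / ((P : ℝ) - t) := by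
  have hfact : (k.factorial : ℝ) ≠ 0 := by positivity
  rw [prod_div_distrib, ← Nat.cast_descFactorial_eq_prod hkN,
    ← Nat.cast_descFactorial_eq_prod hkP, Nat.descFactorial_eq_factorial_mul_choose,
    Nat.descFactorial_eq_factorial_mul_choose, Nat.cast_mul, Nat.cast_mul,
    mul_div_mul_left _ _ hfact]

theorem sub_div_le_rpow_sub_div {Q b c a : ℝ} (hQ : 0 < Q) (hbQ : b ≤ Q) (ha : 1 ≤ a)
    (hbc : a * b ≤ c) : (Q - c) / Q ≤ ((Q - b) / Q) ^ a :=
  calc (Q - c) / Q ≤ 1 + a * -(b / Q) := by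
        rw [div_le_iff₀ hQ]; field_simp; linarith
    _ ≤ (1 + -(b / Q)) ^ a := by
        refine one_add_mul_self_le_rpow_one_add ?_ ha
        rw [neg_le, neg_neg]; exact div_le_one_of_le₀ hbQ hQ.le
    _ = ((Q - b) / Q) ^ a := by
        congr 1; field_simp; ring

theorem Nat.choose_sub_div_choose_le_rpow {P m n k : ℕ} {a : ℝ} (ha : 1 ≤ a)
    (hmn : a * m ≤ n) :
    ((P - n).choose k : ℝ) / P.choose k ≤ (((P - m).choose k : ℝ) / P.choose k) ^ a := by
  obtain hk | hk := le_or_gt k (P - n)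
  swap
  · rw [Nat.choose_eq_zero_of_lt hk, Nat.cast_zero, zero_div]
    positivity
  have hm : m ≤ n := by
    exact_mod_cast (le_mul_of_one_le_left (Nat.cast_nonneg m) ha).trans hmn
  rw [Nat.choose_div_choose_eq_prod hk (by omega),
    Nat.choose_div_choose_eq_prod (by omega) (by omega), ← Real.finsetProd_rpow]
  · refine prod_le_prod (fun t ht => ?_) (fun t ht => ?_)
    · have := mem_range.mp ht
      exact div_nonneg (sub_nonneg.mpr (mod_cast (by omega : t ≤ P - n)))
        (sub_nonneg.mpr (mod_cast (by omega : t ≤ P)))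
    · have := mem_range.mp ht
      have hmt : (m : ℝ) + t < P := by exact_mod_cast (by omega : m + t < P)
      rw [Nat.cast_sub (by omega), Nat.cast_sub (by omega), sub_right_comm (P : ℝ) (n : ℝ),
        sub_right_comm (P : ℝ) (m : ℝ)]
      exact sub_div_le_rpow_sub_div (by linarith) (by linarith) ha hmn
  · intro t ht
    have := mem_range.mp ht
    exact div_nonneg (sub_nonneg.mpr (mod_cast (by omega : t ≤ P - m)))
      (sub_nonneg.mpr (mod_cast (by omega : t ≤ P)))

theorem stmt3_general (P Ki Kj : ℕ) (a : ℝ) (ha : 1 ≤ a) :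
    (((P - ⌈a * (Ki : ℝ)⌉₊).choose Kj : ℝ)) / ((P.choose Kj : ℝ)) ≤
      ((((P - Ki).choose Kj : ℝ)) / ((P.choose Kj : ℝ))) ^ a :=
  Nat.choose_sub_div_choose_le_rpow ha (Nat.le_ceil _)

theorem stmt3 (P Ki Kj : ℕ) (hKi : 0 < Ki) (hKj : 0 < Kj) (hP : 0 < P)
    (hKiP : Ki ≤ P) (hKjP : Kj ≤ P) (a : ℝ) (ha : 1 ≤ a) :
    (((P - ⌈a * (Ki : ℝ)⌉₊).choose Kj : ℝ)) / ((P.choose Kj : ℝ)) ≤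
      ((((P - Ki).choose Kj : ℝ)) / ((P.choose Kj : ℝ))) ^ a :=
  stmt3_general P Ki Kj a ha
end

section
/- Consider sequences of positive integers K_{i,n}, K_{j,n}, P_n with K_{i,n}, K_{j,n} ≤ P_n, and let p_{ij}(n) = 1 - C(P_n - K_{i,n}, K_{j,n})/C(P_n, K_{j,n}). Then p_{ij}(n) → 0 as n → ∞ if and only if K_{i,n}K_{j,n}/P_n → 0, and under either condition p_{ij}(n) ~ K_{i,n}K_{j,n}/P_n (i.e., their ratio tends to 1). -/
/-!
Write `x = a b / p`. Cancelling factorials gives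
`C(p - a, b) / C(p, b) = ∏_{t < b} (1 - a / (p - t))`; comparing every factor with the extreme
ones, `1 - a / p` and `1 - a / (p - b + 1)`, and applying Bernoulli's inequality to the two
resulting powers yields `x / (1 + x) ≤ p_ij ≤ x / (1 - x)`, the upper bound once `x < 1`.
Both claims follow from this sandwich by squeezing.
-/

open Filter Finset Topology Nat

/-- The probability that a uniformly random `b`-subset of a `p`-set meets a fixed `a`-subset. -/
noncomputable def intersectProb (a b p : ℕ) : ℝ := 1 - ((p - a).choose b : ℝ) / p.choose b

lemma cast_choose_sub_div_cast_choose {a b p : ℕ} (h : a + b ≤ p) :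
    ((p - a).choose b : ℝ) / p.choose b = ∏ t ∈ range b, (1 - a / (p - t : ℝ)) := by
  have hdesc (n : ℕ) : (n.descFactorial b : ℝ) = b ! * n.choose b := by
    exact_mod_cast n.descFactorial_eq_factorial_mul_choose b
  rw [← mul_div_mul_left _ _ (by positivity : (b ! : ℝ) ≠ 0), ← hdesc, ← hdesc,
    descFactorial_eq_prod_range, descFactorial_eq_prod_range, cast_prod, cast_prod,
    ← prod_div_distrib]
  refine prod_congr rfl fun t ht => ?_
  have htb : t < b := mem_range.1 ht
  have hpt : (0 : ℝ) < p - t := by rw [sub_pos]; exact_mod_cast (by omega : t < p)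
  rw [Nat.cast_sub (by omega), Nat.cast_sub (by omega), Nat.cast_sub (by omega)]
  field_simp
  ring

lemma one_sub_mul_le_one_sub_pow {y : ℝ} (hy : y ≤ 1) (n : ℕ) :
    1 - n * y ≤ (1 - y) ^ n := by
  simpa [sub_eq_add_neg] using one_add_mul_le_pow (by linarith : (-2 : ℝ) ≤ -y) n

lemma one_sub_pow_le_inv_one_add_mul {y : ℝ} (hy₀ : 0 ≤ y) (hy₁ : y ≤ 1) (n : ℕ) :
    (1 - y) ^ n ≤ (1 + n * y)⁻¹ := by
  rw [← one_div, le_div_iff₀ (by positivity)]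
  calc (1 - y) ^ n * (1 + n * y) ≤ (1 - y) ^ n * (1 + y) ^ n := by
        gcongr
        exact one_add_mul_le_pow (by linarith) n
    _ = (1 - y ^ 2) ^ n := by rw [← mul_pow]; ring
    _ ≤ 1 := pow_le_one₀ (by nlinarith) (by nlinarith)

lemma div_one_add_le_intersectProb (a b p : ℕ) :
    (a * b / p : ℝ) / (1 + a * b / p) ≤ intersectProb a b p := by
  have hx : (0 : ℝ) ≤ a * b / p := by positivity
  rcases Nat.eq_zero_or_pos b with rfl | hb
  · simp [intersectProb]
  rcases le_or_gt (a + b) p with h | h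
  · have hpR : (a + b : ℝ) ≤ p := by exact_mod_cast h
    have hprod : ∏ t ∈ range b, (1 - a / (p - t : ℝ)) ≤ (1 - a / p) ^ b := by
      refine (prod_le_prod (fun t ht => ?_) fun t ht => ?_).trans_eq
        (pow_eq_prod_const _ b).symm
      all_goals
        have htb : (t + 1 : ℝ) ≤ b := by exact_mod_cast mem_range.1 ht
        have hpt : (0 : ℝ) < p - t := by linarith
      · rw [sub_nonneg, div_le_one hpt]; linarith
      · gcongr; linarith
    have hap : (a / p : ℝ) ≤ 1 := div_le_one_of_le₀ (by linarith) (by positivity)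
    have hpow := one_sub_pow_le_inv_one_add_mul (by positivity) hap b
    rw [intersectProb, cast_choose_sub_div_cast_choose h]
    have hx_eq : (a * b / p : ℝ) / (1 + a * b / p) = 1 - (1 + b * (a / p : ℝ))⁻¹ := by
      field_simp; ring
    linarith
  · rw [intersectProb, Nat.choose_eq_zero_of_lt (by omega), Nat.cast_zero, zero_div, sub_zero,
      div_le_one (by positivity)]
    linarith

lemma intersectProb_le {a b p : ℕ} (ha : 0 < a) (hb : 0 < b) (h : a * b < p) :
    intersectProb a b p ≤ (a * b / p : ℝ) / (1 - a * b / p) := by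
  have hsum : a + b ≤ p := by nlinarith
  have hpR : (a + b : ℝ) ≤ p := by exact_mod_cast hsum
  have habR : (a * b : ℝ) < p := by exact_mod_cast h
  have hp : (0 : ℝ) < p := by exact_mod_cast (by omega : 0 < p)
  have hbR : (b : ℝ) ≤ a * b := by exact_mod_cast Nat.le_mul_of_pos_left b ha
  have hden : (0 : ℝ) < p - b + 1 := by linarith
  have hprod : (1 - a / (p - b + 1 : ℝ)) ^ b ≤ ∏ t ∈ range b, (1 - a / (p - t : ℝ)) := by
    refine (pow_eq_prod_const _ b).trans_le (prod_le_prod (fun t ht => ?_) fun t ht => ?_)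
    · rw [sub_nonneg, div_le_one hden]; linarith
    · have htb : (t + 1 : ℝ) ≤ b := by exact_mod_cast mem_range.1 ht
      gcongr; linarith
  have hy : (a / (p - b + 1) : ℝ) ≤ 1 := div_le_one_of_le₀ (by linarith) hden.le
  have hbern := one_sub_mul_le_one_sub_pow hy b
  rw [intersectProb, cast_choose_sub_div_cast_choose hsum]
  calc 1 - ∏ t ∈ range b, (1 - a / (p - t : ℝ)) ≤ b * (a / (p - b + 1)) := by linarith
    _ ≤ a * b / (p - a * b) := by
      rw [mul_div_assoc', mul_comm (b : ℝ)]
      gcongr; linarith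
    _ = (a * b / p : ℝ) / (1 - a * b / p) := by
      field_simp

section Sandwich

variable {ι : Type*} {l : Filter ι} {q x : ι → ℝ}

lemma tendsto_zero_iff_of_le_of_le (hx : ∀ i, 0 ≤ x i) (hlow : ∀ i, x i / (1 + x i) ≤ q i)
    (hup : ∀ i, x i < 1 → q i ≤ x i / (1 - x i)) :
    Tendsto q l (𝓝 0) ↔ Tendsto x l (𝓝 0) := by
  have hq (i : ι) : 0 ≤ q i := (div_nonneg (hx i) (by linarith [hx i])).trans (hlow i)
  constructor
  · intro hq0
    refine squeeze_zero' (.of_forall hx) ?_ (by simpa using hq0.const_mul 2)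
    filter_upwards [hq0.eventually (gt_mem_nhds one_half_pos)] with i hi
    have h := (div_le_iff₀ (by linarith [hx i])).1 (hlow i)
    nlinarith [hx i]
  · intro hx0
    refine squeeze_zero' (.of_forall hq) ?_ (by simpa using hx0.const_mul 2)
    filter_upwards [hx0.eventually (gt_mem_nhds one_half_pos)] with i hi
    refine (hup i (by linarith)).trans ?_
    rw [div_le_iff₀ (by linarith)]
    nlinarith [hx i]

lemma tendsto_div_one_of_le_of_le (hx : ∀ i, 0 < x i) (hlow : ∀ i, x i / (1 + x i) ≤ q i)
    (hup : ∀ i, x i < 1 → q i ≤ x i / (1 - x i)) (hx0 : Tendsto x l (𝓝 0)) :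
    Tendsto (fun i => q i / x i) l (𝓝 1) := by
  have hlim (s : ℝ) : Tendsto (fun i => (1 + s * x i)⁻¹) l (𝓝 1) := by
    simpa using ((hx0.const_mul s).const_add 1).inv₀ (by simp)
  refine tendsto_of_tendsto_of_tendsto_of_le_of_le' (hlim 1) (hlim (-1)) ?_ ?_
  · refine Eventually.of_forall fun i => ?_
    rw [le_div_iff₀ (hx i)]
    simpa [div_eq_inv_mul] using hlow i
  · filter_upwards [hx0.eventually (gt_mem_nhds one_pos)] with i hi
    rw [div_le_iff₀ (hx i)]
    simpa [div_eq_inv_mul, sub_eq_add_neg] using hup i hi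

end Sandwich

theorem stmt6_general (Ki Kj P : ℕ → ℕ)
    (hKi : ∀ n, 0 < Ki n) (hKj : ∀ n, 0 < Kj n) (hP : ∀ n, 0 < P n) :
    (Tendsto (fun n => 1 - (((P n - Ki n).choose (Kj n) : ℝ)) / (((P n).choose (Kj n) : ℝ)))
        atTop (nhds 0)
      ↔ Tendsto (fun n => ((Ki n : ℝ) * (Kj n : ℝ)) / (P n : ℝ)) atTop (nhds 0)) ∧
    (Tendsto (fun n => 1 - (((P n - Ki n).choose (Kj n) : ℝ)) / (((P n).choose (Kj n) : ℝ)))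
        atTop (nhds 0) →
      Tendsto (fun n =>
          (1 - (((P n - Ki n).choose (Kj n) : ℝ)) / (((P n).choose (Kj n) : ℝ))) /
            (((Ki n : ℝ) * (Kj n : ℝ)) / (P n : ℝ)))
        atTop (nhds 1)) := by
  have hx (n : ℕ) : (0 : ℝ) < Ki n * Kj n / P n := by
    have := hKi n; have := hKj n; have := hP n
    positivity
  have hlow (n : ℕ) := div_one_add_le_intersectProb (Ki n) (Kj n) (P n)
  have hup (n : ℕ) (h : (Ki n * Kj n / P n : ℝ) < 1) :
      intersectProb (Ki n) (Kj n) (P n) ≤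
        (Ki n * Kj n / P n : ℝ) / (1 - Ki n * Kj n / P n) := by
    rw [div_lt_one (by exact_mod_cast hP n)] at h
    exact intersectProb_le (hKi n) (hKj n) (by exact_mod_cast h)
  have hiff := tendsto_zero_iff_of_le_of_le (l := atTop) (fun n => (hx n).le) hlow hup
  exact ⟨hiff, fun hq => tendsto_div_one_of_le_of_le hx hlow hup (hiff.1 hq)⟩

theorem stmt6 (Ki Kj P : ℕ → ℕ)
    (hKi : ∀ n, 0 < Ki n) (hKj : ∀ n, 0 < Kj n) (hP : ∀ n, 0 < P n)
    (hle : ∀ n, Ki n ≤ P n ∧ Kj n ≤ P n) :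
    (Tendsto (fun n => 1 - (((P n - Ki n).choose (Kj n) : ℝ)) / (((P n).choose (Kj n) : ℝ)))
        atTop (nhds 0)
      ↔ Tendsto (fun n => ((Ki n : ℝ) * (Kj n : ℝ)) / (P n : ℝ)) atTop (nhds 0)) ∧
    (Tendsto (fun n => 1 - (((P n - Ki n).choose (Kj n) : ℝ)) / (((P n).choose (Kj n) : ℝ)))
        atTop (nhds 0) →
      Tendsto (fun n =>
          (1 - (((P n - Ki n).choose (Kj n) : ℝ)) / (((P n).choose (Kj n) : ℝ))) /
            (((Ki n : ℝ) * (Kj n : ℝ)) / (P n : ℝ)))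
        atTop (nhds 1)) :=
  stmt6_general Ki Kj P hKi hKj hP
end

section
/- Under a scaling satisfying λ_1(n) ~ c (log n)/n for some c > 0, together with (K_{1,n})²/P_n = ω(1/n), it holds that K_{r,n}/K_{1,n} = o(log n) and (K_{r,n})²/P_n = o((log n)²/n). -/
/-!
A key ring of size `k` drawn from a pool of `n` keys misses a fixed ring of size `a` with
probability `C(n-a, k) / C(n, k) ≤ (1 - k/n)^a ≤ 1 / (1 + a k / n)`. Hence, for
`x = K₁ Kᵣ / P`, the single summand `μᵣ p₁ᵣ` of `λ₁(n) ~ c log n / n` gives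
`x / (1 + x) = O(log n / n)`, so `x = O(log n / n)`. Then
`Kᵣ / K₁ = x · P / K₁² = O(log n) / (n K₁² / P) = o(log n)` and
`Kᵣ² / P = x · Kᵣ / K₁ = o((log n)² / n)`.
-/

open Filter Topology

lemma Nat.choose_sub_one_mul_le {m n : ℕ} (k : ℕ) (hm : 0 < m) (hmn : m ≤ n) :
    (m - 1).choose k * n ≤ m.choose k * (n - k) := by
  have hstep := Nat.choose_mul_succ_eq (m - 1) k
  rw [Nat.sub_add_cancel hm] at hstep
  have hcross : (m - k) * n ≤ (n - k) * m := by
    rw [Nat.sub_mul, Nat.sub_mul, mul_comm m n]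
    exact Nat.sub_le_sub_left (Nat.mul_le_mul_left k hmn) _
  refine Nat.le_of_mul_le_mul_right ?_ hm
  calc (m - 1).choose k * n * m = m.choose k * (m - k) * n := by rw [← hstep]; ring
    _ ≤ m.choose k * (n - k) * m := by
      rw [mul_assoc, mul_assoc]; exact Nat.mul_le_mul_left _ hcross

lemma Nat.choose_sub_mul_pow_le (n k a : ℕ) :
    (n - a).choose k * n ^ a ≤ n.choose k * (n - k) ^ a := by
  induction a with
  | zero => simp
  | succ a ih =>
    rcases Nat.eq_zero_or_pos (n - a) with hna | hna
    · rcases k.eq_zero_or_pos with rfl | hk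
      · simp
      · simp [show n - (a + 1) = 0 by omega, Nat.choose_eq_zero_of_lt hk]
    · calc (n - (a + 1)).choose k * n ^ (a + 1)
          = (n - a - 1).choose k * n * n ^ a := by rw [Nat.sub_add_eq]; ring
        _ ≤ (n - a).choose k * (n - k) * n ^ a :=
          Nat.mul_le_mul_right _ (Nat.choose_sub_one_mul_le k hna (Nat.sub_le n a))
        _ = (n - a).choose k * n ^ a * (n - k) := by ring
        _ ≤ n.choose k * (n - k) ^ a * (n - k) := Nat.mul_le_mul_right _ ih
        _ = n.choose k * (n - k) ^ (a + 1) := by ring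

lemma one_sub_pow_mul_one_add_mul_le_one {t : ℝ} (ht0 : 0 ≤ t) (ht1 : t ≤ 1) (a : ℕ) :
    (1 - t) ^ a * (1 + a * t) ≤ 1 :=
  calc (1 - t) ^ a * (1 + a * t) ≤ (1 - t) ^ a * (1 + t) ^ a :=
        mul_le_mul_of_nonneg_left (one_add_mul_le_pow (by linarith) a) (by positivity)
    _ = (1 - t ^ 2) ^ a := by rw [← mul_pow]; ring
    _ ≤ 1 := pow_le_one₀ (by nlinarith) (by nlinarith)

lemma div_one_add_le_one_sub_choose_div_choose {n k : ℕ} (a : ℕ) (hk : k ≤ n) :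
    (a * k / n : ℝ) / (1 + a * k / n) ≤ 1 - ((n - a).choose k : ℝ) / n.choose k := by
  rcases Nat.eq_zero_or_pos n with rfl | hn
  · simp [Nat.le_zero.mp hk]
  set t : ℝ := k / n with ht
  have hnR : (0 : ℝ) < n := by exact_mod_cast hn
  have ht0 : 0 ≤ t := by positivity
  have ht1 : t ≤ 1 := div_le_one_of_le₀ (by exact_mod_cast hk) hnR.le
  have hratio : ((n - a).choose k : ℝ) / n.choose k ≤ (1 - t) ^ a := by
    have hchoose : ((n - a).choose k : ℝ) * n ^ a ≤ n.choose k * (n - k) ^ a := by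
      exact_mod_cast Nat.choose_sub_mul_pow_le n k a
    have hC : (0 : ℝ) < n.choose k := by exact_mod_cast Nat.choose_pos hk
    rw [ht, one_sub_div hnR.ne', div_pow, div_le_div_iff₀ hC (by positivity),
      mul_comm _ (n.choose k : ℝ)]
    simpa only [Nat.cast_sub hk] using hchoose
  have hpos : 0 < 1 + a * t := by positivity
  have hbound : (1 - t) ^ a ≤ 1 - a * t / (1 + a * t) := by
    rw [one_sub_div hpos.ne', add_sub_cancel_right, le_div_iff₀ hpos]
    exact one_sub_pow_mul_one_add_mul_le_one ht0 ht1 a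
  rw [mul_div_assoc, ← ht]
  linarith

lemma le_two_mul_of_div_one_add_le {x ε : ℝ} (hx : 0 ≤ x) (hε : ε ≤ 1 / 2)
    (h : x / (1 + x) ≤ ε) : x ≤ 2 * ε := by
  rw [div_le_iff₀ (by linarith)] at h
  nlinarith [mul_le_mul_of_nonneg_left hε hx]

lemma one_sub_choose_div_choose_nonneg (n a k : ℕ) :
    0 ≤ 1 - ((n - a).choose k : ℝ) / n.choose k := by
  rw [sub_nonneg]
  exact div_le_one_of_le₀ (by exact_mod_cast Nat.choose_le_choose k (Nat.sub_le n a))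
    (Nat.cast_nonneg _)

lemma tendsto_log_div_natCast_atTop :
    Tendsto (fun n : ℕ => Real.log n / n) atTop (𝓝 0) :=
  Real.isLittleO_log_id_atTop.tendsto_div_nhds_zero.comp tendsto_natCast_atTop_atTop

section Sequences

variable {a b p : ℕ → ℝ}

lemma eventually_pos_of_tendsto_sq_div_mul_atTop (ha : ∀ n, 0 ≤ a n) (hp : ∀ n, 0 ≤ p n)
    (h : Tendsto (fun n : ℕ => a n ^ 2 / p n * n) atTop atTop) :
    ∀ᶠ n in atTop, 0 < a n ∧ 0 < p n := by
  filter_upwards [h.eventually_gt_atTop 0] with n hn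
  refine ⟨(ha n).lt_of_ne ?_, (hp n).lt_of_ne ?_⟩ <;> rintro h0 <;> simp [← h0] at hn

lemma tendsto_div_div_log_atTop_zero {C : ℝ} (ha : ∀ n, 0 ≤ a n) (hb : ∀ n, 0 ≤ b n)
    (hp : ∀ n, 0 ≤ p n) (hbound : ∀ᶠ n : ℕ in atTop, a n * b n / p n ≤ C * (Real.log n / n))
    (h : Tendsto (fun n : ℕ => a n ^ 2 / p n * n) atTop atTop) :
    Tendsto (fun n : ℕ => b n / a n / Real.log n) atTop (𝓝 0) := by
  have hupper : Tendsto (fun n : ℕ => C * (a n ^ 2 / p n * n)⁻¹) atTop (𝓝 0) := by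
    simpa using (tendsto_inv_atTop_zero.comp h).const_mul C
  refine tendsto_of_tendsto_of_tendsto_of_le_of_le' tendsto_const_nhds hupper ?_ ?_
  · filter_upwards [eventually_ge_atTop 1] with n hn
    have := Real.log_nonneg (Nat.one_le_cast.mpr hn)
    have := ha n; have := hb n
    positivity
  · filter_upwards [hbound, eventually_pos_of_tendsto_sq_div_mul_atTop ha hp h,
      eventually_gt_atTop 1] with n hn ⟨han, hpn⟩ hn1
    have hlog : 0 < Real.log n := Real.log_pos (Nat.one_lt_cast.mpr hn1)
    calc b n / a n / Real.log n = a n * b n / p n * (p n / (a n ^ 2 * Real.log n)) := by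
          field_simp
      _ ≤ C * (Real.log n / n) * (p n / (a n ^ 2 * Real.log n)) :=
          mul_le_mul_of_nonneg_right hn (by positivity)
      _ = C * (a n ^ 2 / p n * n)⁻¹ := by field_simp

lemma tendsto_sq_div_div_log_sq_atTop_zero {C : ℝ} (ha : ∀ n, 0 ≤ a n) (hb : ∀ n, 0 ≤ b n)
    (hp : ∀ n, 0 ≤ p n) (hbound : ∀ᶠ n : ℕ in atTop, a n * b n / p n ≤ C * (Real.log n / n))
    (h : Tendsto (fun n : ℕ => a n ^ 2 / p n * n) atTop atTop)
    (hratio : Tendsto (fun n : ℕ => b n / a n / Real.log n) atTop (𝓝 0)) :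
    Tendsto (fun n : ℕ => b n ^ 2 / p n / (Real.log n ^ 2 / n)) atTop (𝓝 0) := by
  refine tendsto_of_tendsto_of_tendsto_of_le_of_le' tendsto_const_nhds
    (by simpa using hratio.const_mul C) ?_ ?_
  · filter_upwards with n
    have := hb n; have := hp n
    positivity
  · filter_upwards [hbound, eventually_pos_of_tendsto_sq_div_mul_atTop ha hp h,
      eventually_gt_atTop 1] with n hn ⟨han, hpn⟩ hn1
    have hlog : 0 < Real.log n := Real.log_pos (Nat.one_lt_cast.mpr hn1)
    have := hb n
    calc b n ^ 2 / p n / (Real.log n ^ 2 / n)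
          = a n * b n / p n * (b n * n / (a n * Real.log n ^ 2)) := by field_simp
      _ ≤ C * (Real.log n / n) * (b n * n / (a n * Real.log n ^ 2)) :=
          mul_le_mul_of_nonneg_right hn (by positivity)
      _ = C * (b n / a n / Real.log n) := by field_simp

end Sequences

lemma eventually_mul_div_le_of_tendsto_sum {ι : Type*} [Fintype ι] {μ : ι → ℝ}
    (hμ : ∀ j, 0 < μ j) {a P : ℕ → ℕ} {K : ℕ → ι → ℕ} (hKP : ∀ n j, K n j ≤ P n)
    {c : ℝ} (hc : 0 < c)
    (hlam : Tendsto (fun n => (∑ j, μ j *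
        (1 - ((P n - a n).choose (K n j) : ℝ) / (P n).choose (K n j))) /
        (c * Real.log n / n)) atTop (𝓝 1)) (j : ι) :
    ∀ᶠ n : ℕ in atTop, (a n : ℝ) * K n j / P n ≤ 4 * c / μ j * (Real.log n / n) := by
  have hsmall : Tendsto (fun n : ℕ => 2 * c / μ j * (Real.log n / n)) atTop (𝓝 0) := by
    simpa using tendsto_log_div_natCast_atTop.const_mul (2 * c / μ j)
  filter_upwards [hlam.eventually (eventually_le_nhds one_lt_two),
    hsmall.eventually (eventually_le_nhds one_half_pos), eventually_gt_atTop 1]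
    with n hlam_le hsmall_le hn1
  have hscale : 0 < c * Real.log n / n := by
    have := Real.log_pos (Nat.one_lt_cast.mpr hn1)
    positivity
  have hterm : μ j * (1 - ((P n - a n).choose (K n j) : ℝ) / (P n).choose (K n j)) ≤
      2 * (c * Real.log n / n) :=
    (Finset.single_le_sum (fun i _ => mul_nonneg (hμ i).le
      (one_sub_choose_div_choose_nonneg _ _ _)) (Finset.mem_univ j)).trans
      ((div_le_iff₀ hscale).mp hlam_le)
  have hx := div_one_add_le_one_sub_choose_div_choose (a n) (hKP n j)
  have hp : 1 - ((P n - a n).choose (K n j) : ℝ) / (P n).choose (K n j) ≤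
      2 * c / μ j * (Real.log n / n) := by
    rw [div_mul_eq_mul_div, le_div_iff₀ (hμ j), mul_comm]
    linarith [mul_div_assoc c (Real.log n) n]
  calc (a n : ℝ) * K n j / P n ≤ 2 * (2 * c / μ j * (Real.log n / n)) :=
        le_two_mul_of_div_one_add_le (by positivity) hsmall_le (hx.trans hp)
    _ = 4 * c / μ j * (Real.log n / n) := by ring

theorem stmt8_general (r : ℕ) (μ : Fin (r + 1) → ℝ) (K : ℕ → Fin (r + 1) → ℕ) (P : ℕ → ℕ)
    (c : ℝ) (hc : 0 < c)
    (hμ : ∀ j, 0 < μ j) (hKP : ∀ n j, K n j < P n)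
    (hlam : Tendsto
      (fun n => (∑ j, μ j *
          (1 - (((P n - K n 0).choose (K n j) : ℝ)) / (((P n).choose (K n j) : ℝ)))) /
        (c * Real.log n / n)) atTop (nhds 1))
    (homega : Tendsto (fun n => ((K n 0 : ℝ) ^ 2 / (P n : ℝ)) * n) atTop atTop) :
    Tendsto (fun n => ((K n (Fin.last r) : ℝ) / (K n 0 : ℝ)) / Real.log n) atTop (nhds 0) ∧
    Tendsto (fun n => ((K n (Fin.last r) : ℝ) ^ 2 / (P n : ℝ)) / ((Real.log n) ^ 2 / n))
      atTop (nhds 0) := by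
  have hbound := eventually_mul_div_le_of_tendsto_sum (a := fun n => K n 0) hμ
    (fun n j => (hKP n j).le) hc hlam (Fin.last r)
  have hratio := tendsto_div_div_log_atTop_zero (fun n => (K n 0).cast_nonneg)
    (fun n => (K n (Fin.last r)).cast_nonneg) (fun n => (P n).cast_nonneg) hbound homega
  exact ⟨hratio, tendsto_sq_div_div_log_sq_atTop_zero (fun n => (K n 0).cast_nonneg)
    (fun n => (K n (Fin.last r)).cast_nonneg) (fun n => (P n).cast_nonneg) hbound homega hratio⟩

theorem stmt8 (r : ℕ) (μ : Fin (r + 1) → ℝ) (K : ℕ → Fin (r + 1) → ℕ) (P : ℕ → ℕ)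
    (c : ℝ) (hc : 0 < c)
    (hμ : ∀ j, 0 < μ j) (hsum : ∑ j, μ j = 1)
    (hmono : ∀ n, Monotone (K n)) (hKP : ∀ n j, K n j < P n)
    (hK1 : ∀ n, 0 < K n 0)
    (hlam : Tendsto
      (fun n => (∑ j, μ j *
          (1 - (((P n - K n 0).choose (K n j) : ℝ)) / (((P n).choose (K n j) : ℝ)))) /
        (c * Real.log n / n)) atTop (nhds 1))
    (homega : Tendsto (fun n => ((K n 0 : ℝ) ^ 2 / (P n : ℝ)) * n) atTop atTop) :
    Tendsto (fun n => ((K n (Fin.last r) : ℝ) / (K n 0 : ℝ)) / Real.log n) atTop (nhds 0) ∧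
    Tendsto (fun n => ((K n (Fin.last r) : ℝ) ^ 2 / (P n : ℝ)) / ((Real.log n) ^ 2 / n))
      atTop (nhds 0) :=
  stmt8_general r μ K P c hc hμ hKP hlam homega
end

section
/- In a random key graph where every node has exactly K keys drawn uniformly from a P-pool, edge events are pairwise independent along any tree: for any tree T on ℓ labeled vertices, the probability that all ℓ-1 edges of T are present equals p^{ℓ-1}, where p = 1 - C(P-K,K)/C(P,K). -/
/-!
Give every vertex an independent label with law `w` and call an edge present when its endpoints'
labels are `R`-related. If, whatever the label `t` of one endpoint, the edge is present with the
same probability `p` (for key sets: `P(s ∩ t ≠ ∅) = 1 - C(P-K, K) / C(P, K)` for every `K`-set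
`t`), then removing a leaf `v` of a tree factors the probability that all edges are present as
`p` times the same probability for the tree without `v`: sum out `σ v` first, conditionally on
the other labels. Induction on the number of vertices gives `p ^ (ℓ - 1)`.
-/

open Finset

namespace SimpleGraph

variable {V α : Type*}

lemma forall_adj_iff_of_unique_adj {G : SimpleGraph V} {R : α → α → Prop}
    (hR : ∀ x y, R x y → R y x) {v u : V} (hvu : G.Adj v u) (hleaf : ∀ x, G.Adj v x → x = u)
    (σ : V → α) :
    (∀ a b, G.Adj a b → R (σ a) (σ b)) ↔
      R (σ v) (σ u) ∧ ∀ a b : ({v}ᶜ : Set V), (G.induce {v}ᶜ).Adj a b → R (σ a) (σ b) := by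
  refine ⟨fun h => ⟨h v u hvu, fun a b hab => h a b hab⟩, fun ⟨hvu', h⟩ a b hab => ?_⟩
  by_cases ha : a = v
  · subst ha; rwa [hleaf b hab]
  by_cases hb : b = v
  · subst hb; rw [hleaf a hab.symm]; exact hR _ _ hvu'
  exact h ⟨a, ha⟩ ⟨b, hb⟩ hab

variable [Fintype V] [DecidableEq V] [Fintype α]

noncomputable def edgeConstraintProb (G : SimpleGraph V) [DecidableRel G.Adj] (w : α → ℝ)
    (R : α → α → Prop) [DecidableRel R] : ℝ :=
  ∑ σ : V → α, (∏ a, w (σ a)) * if ∀ a b, G.Adj a b → R (σ a) (σ b) then 1 else 0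

lemma edgeConstraintProb_of_subsingleton [Subsingleton V] (G : SimpleGraph V)
    [DecidableRel G.Adj] {w : α → ℝ} (hw : ∑ s, w s = 1) (R : α → α → Prop) [DecidableRel R] :
    G.edgeConstraintProb w R = 1 := by
  have hnoadj (a b : V) : ¬ G.Adj a b := fun h => h.ne (Subsingleton.elim a b)
  simp only [edgeConstraintProb, hnoadj, false_imp_iff, implies_true, if_true, mul_one]
  rw [← Fintype.piFinset_univ, ← prod_univ_sum, hw, prod_const_one]

lemma edgeConstraintProb_eq_mul_of_unique_adj {G : SimpleGraph V} [DecidableRel G.Adj]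
    {w : α → ℝ} {R : α → α → Prop} [DecidableRel R] (hR : ∀ x y, R x y → R y x) {p : ℝ}
    (hp : ∀ t, w t ≠ 0 → ∑ s, w s * (if R s t then 1 else 0) = p)
    {v u : V} (hvu : G.Adj v u) (hleaf : ∀ x, G.Adj v x → x = u) :
    G.edgeConstraintProb w R = p * (G.induce {v}ᶜ).edgeConstraintProb w R := by
  let u' : ({v}ᶜ : Set V) := ⟨u, hvu.ne.symm⟩
  have hsplit (σ : V → α) :
      (∏ a, w (σ a)) * (if ∀ a b, G.Adj a b → R (σ a) (σ b) then 1 else 0) =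
        (w (σ v) * if R (σ v) (σ u') then 1 else 0) * ((∏ a : ({v}ᶜ : Set V), w (σ a)) *
          if ∀ a b, (G.induce {v}ᶜ).Adj a b → R (σ a) (σ b) then 1 else 0) := by
    have hprod : ∏ a, w (σ a) = w (σ v) * ∏ a : ({v}ᶜ : Set V), w (σ a) :=
      Fintype.prod_eq_mul_prod_subtype_ne _ v
    rw [hprod, if_congr (forall_adj_iff_of_unique_adj hR hvu hleaf σ) rfl rfl, ite_and]
    split_ifs <;> ring
  let e : (V → α) ≃ α × (({v}ᶜ : Set V) → α) := Equiv.funSplitAt v α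
  have he_symm_self (s : α) (τ : ({v}ᶜ : Set V) → α) : e.symm (s, τ) v = s :=
    dif_pos rfl
  have he_symm_ne (s : α) (τ : ({v}ᶜ : Set V) → α) (a : ({v}ᶜ : Set V)) :
      e.symm (s, τ) a = τ a :=
    dif_neg a.2
  have hinner (τ : ({v}ᶜ : Set V) → α) :
      (∑ s, w s * if R s (τ u') then 1 else 0) * (∏ a, w (τ a)) = p * ∏ a, w (τ a) := by
    by_cases hτ : w (τ u') = 0
    · rw [prod_eq_zero (mem_univ u') hτ, mul_zero, mul_zero]
    · rw [hp _ hτ]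
  rw [edgeConstraintProb, sum_congr rfl fun σ _ => hsplit σ, ← e.symm.sum_comp,
    Fintype.sum_prod_type, sum_comm, edgeConstraintProb, mul_sum]
  refine sum_congr rfl fun τ _ => ?_
  simp only [he_symm_self, he_symm_ne, ← sum_mul]
  rw [← mul_assoc, hinner, mul_assoc]

theorem IsTree.edgeConstraintProb_eq_pow {G : SimpleGraph V} [DecidableRel G.Adj]
    (hG : G.IsTree) {w : α → ℝ} (hw : ∑ s, w s = 1) {R : α → α → Prop} [DecidableRel R]
    (hR : ∀ x y, R x y → R y x) {p : ℝ}
    (hp : ∀ t, w t ≠ 0 → ∑ s, w s * (if R s t then 1 else 0) = p) :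
    G.edgeConstraintProb w R = p ^ (Fintype.card V - 1) := by
  induction hn : Fintype.card V using Nat.strong_induction_on generalizing V with
  | _ n ih =>
  rcases subsingleton_or_nontrivial V with hV | hV
  · have : n ≤ 1 := hn ▸ Fintype.card_le_one_iff_subsingleton.mpr hV
    rw [edgeConstraintProb_of_subsingleton G hw, Nat.sub_eq_zero_of_le this, pow_zero]
  obtain ⟨v, hv⟩ := hG.exists_vert_degree_one_of_nontrivial
  obtain ⟨u, hvu, hleaf⟩ := degree_eq_one_iff_existsUnique_adj.mp hv
  have hG' : (G.induce {v}ᶜ).IsTree :=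
    ⟨hG.connected.induce_compl_singleton_of_degree_eq_one hv, hG.isAcyclic.induce _⟩
  have hcard : Fintype.card ({v}ᶜ : Set V) = n - 1 := by
    rw [Fintype.card_compl_set, Set.card_singleton, hn]
  have hn2 : 2 ≤ n := hn ▸ Fintype.one_lt_card
  rw [edgeConstraintProb_eq_mul_of_unique_adj hR hp hvu hleaf, ih _ (by omega) hG' hcard,
    ← pow_succ']
  congr 1
  omega

end SimpleGraph

section KSubsets

open Fintype

noncomputable def kSubsetWeight (β : Type*) [Fintype β] (K : ℕ) (s : Finset β) : ℝ :=
  if #s = K then 1 / ((card β).choose K : ℝ) else 0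

variable {β : Type*} [Fintype β]

lemma sum_kSubsetWeight_mul_ite (K : ℕ) (Q : Finset β → Prop) [DecidablePred Q] :
    ∑ s, kSubsetWeight β K s * (if Q s then 1 else 0) =
      #{s ∈ powersetCard K univ | Q s} / ((card β).choose K : ℝ) := by
  have hfilter : ({s | #s = K ∧ Q s} : Finset (Finset β)) =
      {s ∈ powersetCard K (univ : Finset β) | Q s} := by
    ext s
    simp [mem_powersetCard]
  simp only [kSubsetWeight, ite_zero_mul_ite_zero, mul_one]
  rw [← sum_filter, hfilter, sum_const, nsmul_eq_mul, mul_one_div]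

lemma card_eq_of_kSubsetWeight_ne_zero {K : ℕ} {s : Finset β} (hs : kSubsetWeight β K s ≠ 0) :
    #s = K := by
  by_contra h
  exact hs (if_neg h)

lemma sum_kSubsetWeight {K : ℕ} (hK : K ≤ card β) : ∑ s, kSubsetWeight β K s = 1 := by
  have hC : ((card β).choose K : ℝ) ≠ 0 := by exact_mod_cast (Nat.choose_pos hK).ne'
  simpa [card_powersetCard, hC] using sum_kSubsetWeight_mul_ite (β := β) K fun _ => True

lemma card_powersetCard_filter_inter_eq_empty [DecidableEq β] (K : ℕ) (t : Finset β) :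
    #{s ∈ powersetCard K univ | s ∩ t = ∅} = (card β - #t).choose K := by
  rw [← card_compl, ← card_powersetCard]
  congr 1
  ext s
  simp [mem_powersetCard, subset_compl_iff_disjoint_right, disjoint_iff_inter_eq_empty, and_comm]

lemma sum_kSubsetWeight_mul_inter_ne_empty [DecidableEq β] {K : ℕ} (hK : K ≤ card β)
    {t : Finset β} (ht : #t = K) :
    ∑ s, kSubsetWeight β K s * (if s ∩ t ≠ ∅ then 1 else 0) =
      1 - ((card β - K).choose K : ℝ) / (card β).choose K := by
  have hC : ((card β).choose K : ℝ) ≠ 0 := by exact_mod_cast (Nat.choose_pos hK).ne'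
  have hcount := card_filter_add_card_filter_not (s := powersetCard K (univ : Finset β))
    (p := fun s => s ∩ t = ∅)
  rw [card_powersetCard_filter_inter_eq_empty, card_powersetCard, card_univ, ht] at hcount
  rw [sum_kSubsetWeight_mul_ite, eq_sub_iff_add_eq, ← add_div, div_eq_one_iff_eq hC]
  exact_mod_cast (add_comm _ _).trans hcount

end KSubsets

theorem stmt16_general (l P K : ℕ) (hKP : K ≤ P)
    (T : SimpleGraph (Fin l)) [DecidableRel T.Adj] (hT : T.IsTree) :
    (∑ σ : Fin l → Finset (Fin P),
        (∏ a, if (σ a).card = K then 1 / ((P.choose K : ℝ)) else 0) *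
          (if ∀ a b : Fin l, T.Adj a b → σ a ∩ σ b ≠ ∅ then 1 else 0)) =
      (1 - (((P - K).choose K : ℝ)) / ((P.choose K : ℝ))) ^ (l - 1) := by
  have hK : K ≤ Fintype.card (Fin P) := by rwa [Fintype.card_fin]
  have h := hT.edgeConstraintProb_eq_pow (sum_kSubsetWeight hK) (R := fun s t => s ∩ t ≠ ∅)
    (fun s t hst => by rwa [inter_comm]) fun t ht =>
      sum_kSubsetWeight_mul_inter_ne_empty hK (card_eq_of_kSubsetWeight_ne_zero ht)
  simp only [SimpleGraph.edgeConstraintProb, kSubsetWeight, Fintype.card_fin] at h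
  -- `h` and the goal differ only in the `Decidable` instance of the edge condition
  convert h

theorem stmt16 (l P K : ℕ) (hK : 0 < K) (hKP : K ≤ P) (hl : 1 ≤ l)
    (T : SimpleGraph (Fin l)) [DecidableRel T.Adj] (hT : T.IsTree) :
    (∑ σ : Fin l → Finset (Fin P),
        (∏ a, if (σ a).card = K then 1 / ((P.choose K : ℝ)) else 0) *
          (if ∀ a b : Fin l, T.Adj a b → σ a ∩ σ b ≠ ∅ then 1 else 0)) =
      (1 - (((P - K).choose K : ℝ)) / ((P.choose K : ℝ))) ^ (l - 1) :=
  stmt16_general l P K hKP T hT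
end

section
/- In the inhomogeneous random key graph restricted to ℓ nodes with key ring sizes at most K_r, the probability that the induced subgraph on these ℓ nodes is connected is at most ℓ^{ℓ-2} (p_{rr})^{ℓ-1}, where p_{rr} = 1 - C(P-K_r, K_r)/C(P, K_r). -/
open Finset
open scoped Classical

/-!
A connected graph on `l` labelled nodes contains a spanning tree, and spanning trees are encoded
by Prüfer words of length `l - 2`, so the probability of connectivity is at most `l ^ (l - 2)`
times the largest probability that the `l - 1` edges decoded from one word are all present.
Decoding removes the tree's leaves one at a time; the key ring of a removed leaf is independent
of everything that remains, so integrating it out costs a factor bounded by the probability that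
it meets one fixed ring. That probability is at most `p_rr`, because
`C(P - s, k) / C(P, k)` decreases in both `s` and `k` and all ring sizes are at most `K_r`.

Instead of going through spanning trees, the Prüfer word is read off the connected graph
directly: repeatedly delete the least vertex, other than the maximum, whose removal keeps the
graph connected, and record one of its neighbours.
-/

section Resampling

variable {ι X : Type*} [Fintype ι] [DecidableEq ι] {f : X → ℝ}

theorem prod_update_mul_eq_prod_mul (ω : ι → X) (v : ι) (x : X) :
    (∏ a, f (Function.update ω v x a)) * f (ω v) = (∏ a, f (ω a)) * f x := by
  simp_rw [Function.apply_update (fun _ => f)]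
  rw [prod_update_of_mem (mem_univ v), prod_eq_mul_prod_sdiff_singleton_of_mem (mem_univ v)]
  ring

variable [Fintype X]

theorem sum_prod_eq_one (hf : ∑ x, f x = 1) : ∑ ω : ι → X, ∏ a, f (ω a) = 1 := by
  simp [← Fintype.prod_sum fun _ => f, hf]

theorem sum_prod_mul_eq_sum_prod_mul_sum_update (hf : ∑ x, f x = 1) (v : ι)
    (Φ : (ι → X) → ℝ) :
    ∑ ω, (∏ a, f (ω a)) * Φ ω =
      ∑ ω, (∏ a, f (ω a)) * ∑ x, f x * Φ (Function.update ω v x) := by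
  have hσ : Function.Involutive fun q : (ι → X) × X => (Function.update q.1 v q.2, q.1 v) := by
    rintro ⟨ω, x⟩
    simp
  calc ∑ ω, (∏ a, f (ω a)) * Φ ω
      = ∑ q : (ι → X) × X, (∏ a, f (q.1 a)) * f q.2 * Φ q.1 := by
        simp_rw [Fintype.sum_prod_type, mul_right_comm _ _ (Φ _), ← mul_sum, hf, mul_one]
    _ = ∑ q : (ι → X) × X, (∏ a, f (Function.update q.1 v q.2 a)) * f (q.1 v) *
          Φ (Function.update q.1 v q.2) :=
        (Equiv.sum_comp hσ.toPerm (fun q => (∏ a, f (q.1 a)) * f q.2 * Φ q.1)).symm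
    _ = ∑ ω, (∏ a, f (ω a)) * ∑ x, f x * Φ (Function.update ω v x) := by
        simp_rw [prod_update_mul_eq_prod_mul, Fintype.sum_prod_type, mul_sum, mul_assoc]

end Resampling

section Peeling

variable {ι X : Type*}

/-- The edges form a forest that is dismantled by deleting the first vertex of each edge as a
leaf, in order. -/
def IsLeafOrder (L : List (ι × ι)) : Prop :=
  (∀ e ∈ L, e.1 ≠ e.2) ∧ L.Pairwise fun e e' => e.1 ≠ e'.1 ∧ e.1 ≠ e'.2

theorem IsLeafOrder.of_cons {e : ι × ι} {L : List (ι × ι)} (h : IsLeafOrder (e :: L)) :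
    IsLeafOrder L :=
  ⟨fun e' he' => h.1 e' (List.mem_cons_of_mem e he'), (List.pairwise_cons.1 h.2).2⟩

variable [Fintype ι] [DecidableEq ι] [Fintype X] {f : X → ℝ}

theorem sum_filter_forall_mem_prod_le_pow (hf0 : ∀ x, 0 ≤ f x) (hf1 : ∑ x, f x = 1)
    {B : X → X → Prop} [DecidableRel B] {p : ℝ} (hp : 0 ≤ p)
    (hB : ∀ y, f y ≠ 0 → ∑ x with B x y, f x ≤ p) {L : List (ι × ι)} (hL : IsLeafOrder L) :
    ∑ ω : ι → X with ∀ e ∈ L, B (ω e.1) (ω e.2), ∏ a, f (ω a) ≤ p ^ L.length := by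
  induction L with
  | nil => simp [sum_prod_eq_one hf1]
  | cons e L ih =>
    obtain ⟨v, u⟩ := e
    have hvu : v ≠ u := hL.1 _ List.mem_cons_self
    have hfresh := (List.pairwise_cons.1 hL.2).1
    let E : (ι → X) → Prop := fun ω => ∀ e ∈ L, B (ω e.1) (ω e.2)
    have hE : ∀ ω x, E (Function.update ω v x) ↔ E ω := by
      intro ω x
      refine forall₂_congr fun e he => ?_
      rw [Function.update_of_ne (hfresh e he).1.symm, Function.update_of_ne (hfresh e he).2.symm]
    have hW : ∀ ω : ι → X, f (ω u) = 0 → ∏ a, f (ω a) = 0 :=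
      fun ω h => prod_eq_zero (mem_univ u) h
    calc ∑ ω : ι → X with ∀ e ∈ (v, u) :: L, B (ω e.1) (ω e.2), ∏ a, f (ω a)
        = ∑ ω, (∏ a, f (ω a)) * if B (ω v) (ω u) ∧ E ω then 1 else 0 := by
          rw [sum_filter]
          refine sum_congr rfl fun ω _ => ?_
          simp [E]
      _ = ∑ ω, (∏ a, f (ω a)) * if E ω then ∑ x with B x (ω u), f x else 0 := by
          rw [sum_prod_mul_eq_sum_prod_mul_sum_update hf1 v]
          refine sum_congr rfl fun ω _ => ?_
          simp only [Function.update_self, Function.update_of_ne hvu.symm, hE]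
          by_cases h : E ω <;> simp [h, sum_filter]
      _ ≤ ∑ ω, (∏ a, f (ω a)) * if E ω then p else 0 := by
          refine sum_le_sum fun ω _ => ?_
          by_cases hu : f (ω u) = 0
          · simp [hW ω hu]
          · exact mul_le_mul_of_nonneg_left (by split_ifs <;> simp [hB _ hu])
              (prod_nonneg fun a _ => hf0 _)
      _ = p * ∑ ω with E ω, ∏ a, f (ω a) := by
          rw [sum_filter, mul_sum]
          refine sum_congr rfl fun ω _ => ?_
          split_ifs <;> ring
      _ ≤ p ^ ((v, u) :: L).length := by
          rw [List.length_cons, pow_succ']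
          exact mul_le_mul_of_nonneg_left (ih hL.of_cons) hp

end Peeling

namespace SimpleGraph

variable {V : Type*} {G : SimpleGraph V}

theorem connected_induce_insert {s : Set V} {v w : V} (hs : (G.induce s).Connected)
    (hw : w ∈ s) (hvw : G.Adj v w) : (G.induce (insert v s)).Connected := by
  have h := induce_union_connected (induce_pair_connected_of_adj hvw).preconnected hs.preconnected
    ⟨w, by simp, hw⟩
  rwa [Set.insert_union, Set.singleton_union, Set.insert_eq_of_mem hw] at h

theorem Connected.exists_adj_of_one_lt_card {A : Finset V}
    (hA : (G.induce (A : Set V)).Connected) (hcard : 1 < #A) {v : V} (hv : v ∈ A) :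
    ∃ u ∈ A, G.Adj v u := by
  have : Nontrivial (A : Set V) := Set.nontrivial_coe_sort.2 (one_lt_card_iff_nontrivial.1 hcard)
  obtain ⟨u, hu⟩ := hA.preconnected.exists_adj_of_nontrivial ⟨v, hv⟩
  exact ⟨u, u.2, hu⟩

theorem connected_induce_erase_of_compl_singleton [DecidableEq V] {A : Finset V} {y : A}
    (h : ((G.induce (A : Set V)).induce {y}ᶜ).Connected) :
    (G.induce (A.erase y : Set V)).Connected := by
  refine h.map ⟨fun x => ⟨x.1.1, mem_erase.2 ⟨fun hx => x.2 (Subtype.ext hx), x.1.2⟩⟩, id⟩ ?_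
  rintro ⟨x, hx⟩
  exact ⟨⟨⟨x, (mem_erase.1 hx).2⟩, fun h => (mem_erase.1 hx).1 (congrArg Subtype.val h)⟩, rfl⟩

theorem Connected.exists_ne_connected_induce_erase [DecidableEq V] {A : Finset V}
    (hA : (G.induce (A : Set V)).Connected) (hcard : 1 < #A) (z : V) :
    ∃ y ∈ A, y ≠ z ∧ (G.induce (A.erase y : Set V)).Connected := by
  have : Nontrivial (A : Set V) := Set.nontrivial_coe_sort.2 (one_lt_card_iff_nontrivial.1 hcard)
  obtain ⟨T, hTle, hT⟩ := hA.exists_isTree_le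
  obtain ⟨a, b, hab, ha, hb⟩ := hT.exists_ne_and_degree_eq_one
  have hleaf : ∀ y, T.degree y = 1 → (G.induce (A.erase y : Set V)).Connected := fun y hy =>
    connected_induce_erase_of_compl_singleton
      ((hT.connected.induce_compl_singleton_of_degree_eq_one hy).mono (by tauto))
  by_cases haz : a.1 = z
  · exact ⟨b, b.2, fun h => hab (Subtype.ext (haz.trans h.symm)), hleaf b hb⟩
  · exact ⟨a, a.2, haz, hleaf a ha⟩

theorem eq_of_not_preconnected_induce_erase [DecidableEq V] {A : Finset V} {u v x : V}
    (hvA : v ∈ A) (hxv : x ≠ v) (hx : ¬ (G.induce (A.erase x : Set V)).Preconnected)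
    (hvx : (G.induce ((A.erase v).erase x : Set V)).Preconnected) (huA : u ∈ A.erase v)
    (hvu : G.Adj v u) : u = x := by
  by_contra hux
  have hu : u ∈ (A.erase v).erase x := mem_erase.2 ⟨hux, huA⟩
  have h := connected_induce_insert ((connected_iff _).2 ⟨hvx, ⟨⟨u, hu⟩⟩⟩) hu hvu
  rw [← coe_insert, erase_right_comm, insert_erase (mem_erase.2 ⟨hxv.symm, hvA⟩)] at h
  exact hx h.preconnected

end SimpleGraph

section Prufer

variable {V : Type*} [LinearOrder V]

/-- The fallback `u` is never taken when `us.length < #A` (`exists_pruferDecode_cons`). -/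
def pruferDecode : Finset V → List V → List (V × V)
  | _, [] => []
  | A, u :: us =>
    let v := (A \ (u :: us).toFinset).min.untopD u
    (v, u) :: pruferDecode (A.erase v) us

theorem pruferDecode_cons_of_isLeast {A : Finset V} {u v : V} {us : List V}
    (hv : IsLeast (↑(A \ (u :: us).toFinset) : Set V) v) :
    pruferDecode A (u :: us) = (v, u) :: pruferDecode (A.erase v) us := by
  have hmin : (A \ (u :: us).toFinset).min = v := by
    rw [← coe_min' ⟨v, hv.1⟩, WithTop.coe_eq_coe]
    exact (isLeast_min' _ _).unique hv
  simp only [pruferDecode, hmin, WithTop.untopD_coe]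

theorem length_pruferDecode (A : Finset V) (us : List V) :
    (pruferDecode A us).length = us.length := by
  induction us generalizing A <;> simp [pruferDecode, *]

theorem snd_mem_of_mem_pruferDecode {A : Finset V} {us : List V} {e : V × V}
    (he : e ∈ pruferDecode A us) : e.2 ∈ us := by
  induction us generalizing A with
  | nil => simp [pruferDecode] at he
  | cons u us ih =>
    rcases List.mem_cons.1 he with rfl | he
    · exact List.mem_cons_self
    · exact List.mem_cons_of_mem u (ih he)

theorem exists_pruferDecode_cons {A : Finset V} {u : V} {us : List V}
    (h : (u :: us).length < #A) :
    ∃ v ∈ A, v ∉ u :: us ∧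
      pruferDecode A (u :: us) = (v, u) :: pruferDecode (A.erase v) us := by
  have hne : (A \ (u :: us).toFinset).Nonempty := by
    rw [← card_pos]
    have := le_card_sdiff (u :: us).toFinset A
    have := (u :: us).toFinset_card_le
    omega
  obtain ⟨hvA, hvu⟩ := mem_sdiff.1 (min'_mem _ hne)
  exact ⟨_, hvA, by simpa using hvu, pruferDecode_cons_of_isLeast (isLeast_min' _ hne)⟩

theorem fst_mem_of_mem_pruferDecode {A : Finset V} {us : List V} (h : us.length < #A)
    {e : V × V} (he : e ∈ pruferDecode A us) : e.1 ∈ A := by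
  induction us generalizing A with
  | nil => simp [pruferDecode] at he
  | cons u us ih =>
    obtain ⟨v, hvA, -, hdec⟩ := exists_pruferDecode_cons h
    rw [hdec] at he
    rcases List.mem_cons.1 he with rfl | he
    · exact hvA
    · refine mem_of_mem_erase (ih ?_ he)
      rw [card_erase_of_mem hvA]
      simp only [List.length_cons] at h
      omega

theorem isLeafOrder_pruferDecode {A : Finset V} {us : List V} (h : us.length < #A) :
    IsLeafOrder (pruferDecode A us) := by
  induction us generalizing A with
  | nil => simp [pruferDecode, IsLeafOrder]
  | cons u us ih =>
    obtain ⟨v, hvA, hvus, hdec⟩ := exists_pruferDecode_cons h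
    have h' : us.length < #(A.erase v) := by
      rw [card_erase_of_mem hvA]
      simp only [List.length_cons] at h
      omega
    rw [hdec]
    refine ⟨?_, List.pairwise_cons.2 ⟨fun e he => ⟨?_, ?_⟩, (ih h').2⟩⟩
    · intro e he
      rcases List.mem_cons.1 he with rfl | he
      · exact fun hvu => hvus (by simp [show v = u from hvu])
      · exact (ih h').1 e he
    · exact fun hv => (mem_erase.1 (fst_mem_of_mem_pruferDecode h' he)).1 hv.symm
    · exact fun hv => hvus (List.mem_cons_of_mem u (hv ▸ snd_mem_of_mem_pruferDecode he :))

/-- `mem_of_not_preconnected` is the invariant that makes the decoder delete, at each step, the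
vertex chosen by the encoder: every vertex missing from the word is a non-cut vertex. -/
structure IsPruferCode (G : SimpleGraph V) (A : Finset V) (us : List V) : Prop where
  length_add_one : us.length + 1 = #A
  subset : ∀ x ∈ us, x ∈ A
  le_getLast : ∀ t ∈ us.getLast?, ∀ y ∈ A, y ≤ t
  mem_of_not_preconnected : ∀ x ∈ A, ¬ (G.induce (A.erase x : Set V)).Preconnected → x ∈ us
  adj : ∀ e ∈ pruferDecode A us, G.Adj e.1 e.2

open SimpleGraph

theorem IsPruferCode.le_getLast_cons {G : SimpleGraph V} {A : Finset V} {u v : V} {us : List V}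
    (h : IsPruferCode G (A.erase v) us) (hu : u ∈ A.erase v) (hvmax : ∃ t ∈ A, v < t) :
    ∀ y ∈ A, y ≤ (u :: us).getLast (List.cons_ne_nil u us) := by
  have hle : ∀ y ∈ A.erase v, y ≤ (u :: us).getLast (List.cons_ne_nil u us) := by
    intro y hy
    rcases us.eq_nil_or_concat with rfl | ⟨us', w, rfl⟩
    · obtain ⟨a, ha⟩ := card_eq_one.1 h.length_add_one.symm
      rw [ha, mem_singleton] at hy hu
      exact (hy.trans hu.symm).le
    · simpa using h.le_getLast w (by simp) y hy
  intro y hy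
  obtain ⟨t, htA, hvt⟩ := hvmax
  by_cases hyv : y = v
  · exact (hyv ▸ hvt).le.trans (hle t (mem_erase.2 ⟨hvt.ne', htA⟩))
  · exact hle y (mem_erase.2 ⟨hyv, hy⟩)

theorem IsPruferCode.cons {G : SimpleGraph V} {A : Finset V} {u v : V} {us : List V}
    (h : IsPruferCode G (A.erase v) us) (hvA : v ∈ A) (huA : u ∈ A) (hvu : G.Adj v u)
    (hv : (G.induce (A.erase v : Set V)).Preconnected) (hvmax : ∃ t ∈ A, v < t)
    (hleast : ∀ w ∈ A, (∃ t ∈ A, w < t) →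
      (G.induce (A.erase w : Set V)).Preconnected → v ≤ w) :
    IsPruferCode G A (u :: us) := by
  have huA' : u ∈ A.erase v := mem_erase.2 ⟨hvu.ne.symm, huA⟩
  have hsub : ∀ x ∈ u :: us, x ∈ A := by
    simpa using ⟨huA, fun x hx => mem_of_mem_erase (h.subset x hx)⟩
  have hlast := h.le_getLast_cons huA' hvmax
  have hcut : ∀ x ∈ A, ¬ (G.induce (A.erase x : Set V)).Preconnected → x ∈ u :: us := by
    intro x hxA hx
    have hxv : x ≠ v := by rintro rfl; exact hx hv
    by_cases hvx : (G.induce ((A.erase v).erase x : Set V)).Preconnected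
    · exact eq_of_not_preconnected_induce_erase hvA hxv hx hvx huA' hvu ▸ List.mem_cons_self
    · exact List.mem_cons_of_mem u (h.mem_of_not_preconnected x (mem_erase.2 ⟨hxv, hxA⟩) hvx)
  have hmin : IsLeast (↑(A \ (u :: us).toFinset) : Set V) v := by
    refine ⟨by simpa using ⟨hvA, hvu.ne, fun hv => (mem_erase.1 (h.subset v hv)).1 rfl⟩,
      fun w hw => ?_⟩
    simp only [coe_sdiff, Set.mem_sdiff, mem_coe, List.mem_toFinset] at hw
    have ht := List.getLast_mem (List.cons_ne_nil u us)
    refine hleast w hw.1 ⟨_, hsub _ ht, (hlast w hw.1).lt_of_ne fun hwt => hw.2 (hwt ▸ ht)⟩ ?_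
    by_contra hw'
    exact hw.2 (hcut w hw.1 hw')
  have hcard := h.length_add_one
  rw [card_erase_of_mem hvA] at hcard
  refine ⟨?_, hsub, by simpa [List.getLast?_eq_some_getLast] using hlast, hcut, ?_⟩
  · have := card_pos.2 ⟨v, hvA⟩
    simp only [List.length_cons]
    omega
  · rw [pruferDecode_cons_of_isLeast hmin]
    intro e he
    rcases List.mem_cons.1 he with rfl | he
    exacts [hvu, h.adj e he]

theorem SimpleGraph.Connected.exists_isPruferCode {G : SimpleGraph V} {A : Finset V}
    (hA : (G.induce (A : Set V)).Connected) : ∃ us, IsPruferCode G A us := by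
  obtain ⟨n, hn⟩ : ∃ n, #A = n + 1 := by
    obtain ⟨⟨a, ha⟩⟩ := hA.nonempty
    exact Nat.exists_eq_add_one.2 (card_pos.2 ⟨a, ha⟩)
  induction n generalizing A with
  | zero =>
    obtain ⟨b, rfl⟩ := card_eq_one.1 hn
    refine ⟨[], by simp, by simp, by simp, fun x hx hx' => absurd ?_ hx',
      by simp [pruferDecode]⟩
    rw [mem_singleton.1 hx, erase_singleton, coe_empty]
    exact fun x => x.2.elim
  | succ n ih =>
    have h1 : 1 < #A := by omega
    set S := A.filter fun w => (∃ t ∈ A, w < t) ∧ (G.induce (A.erase w : Set V)).Preconnected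
    have hS : S.Nonempty := by
      have hA0 : A.Nonempty := card_pos.1 (by omega)
      obtain ⟨y, hyA, hyz, hy⟩ := hA.exists_ne_connected_induce_erase h1 (A.max' hA0)
      exact ⟨y, mem_filter.2
        ⟨hyA, ⟨_, max'_mem _ _, (le_max' A y hyA).lt_of_ne hyz⟩, hy.preconnected⟩⟩
    obtain ⟨hvA, hvmax, hv⟩ := mem_filter.1 (S.min'_mem hS)
    obtain ⟨u, huA, hvu⟩ := hA.exists_adj_of_one_lt_card h1 hvA
    have hAv : #(A.erase (S.min' hS)) = n + 1 := by rw [card_erase_of_mem hvA]; omega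
    obtain ⟨us, hus⟩ :=
      ih ((connected_iff _).2 ⟨hv, ⟨⟨u, mem_erase.2 ⟨hvu.ne.symm, huA⟩⟩⟩⟩) hAv
    exact ⟨u :: us, hus.cons hvA huA hvu hv hvmax fun w hwA hw hw' =>
      S.min'_le w (mem_filter.2 ⟨hwA, hw, hw'⟩)⟩

end Prufer

theorem SimpleGraph.Connected.exists_pruferDecode_adj {n : ℕ} {G : SimpleGraph (Fin (n + 2))}
    (hG : G.Connected) :
    ∃ s : List.Vector (Fin (n + 2)) n,
      ∀ e ∈ pruferDecode univ (s.toList ++ [Fin.last (n + 1)]), G.Adj e.1 e.2 := by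
  have hG' : (G.induce ((univ : Finset (Fin (n + 2))) : Set (Fin (n + 2)))).Connected := by
    rwa [coe_univ, G.induceUnivIso.connected_iff]
  obtain ⟨us, hus⟩ := hG'.exists_isPruferCode
  have hlen := hus.length_add_one
  rw [card_univ, Fintype.card_fin] at hlen
  rcases us.eq_nil_or_concat with rfl | ⟨us', w, rfl⟩
  · simp at hlen
  have hw : w = Fin.last (n + 1) :=
    Fin.last_le_iff.1 (hus.le_getLast w (by simp) _ (mem_univ _))
  refine ⟨⟨us', by simpa using hlen⟩, ?_⟩
  simpa [hw] using hus.adj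

theorem Finset.sum_filter_le_sum_sum_filter {α β M : Type*} [AddCommMonoid M] [PartialOrder M]
    [IsOrderedAddMonoid M] {s : Finset α} {t : Finset β} {g : α → M} (hg : ∀ a ∈ s, 0 ≤ g a)
    {P : α → Prop} [DecidablePred P] {Q : β → α → Prop} [∀ b, DecidablePred (Q b)]
    (h : ∀ a ∈ s, P a → ∃ b ∈ t, Q b a) :
    ∑ a ∈ s with P a, g a ≤ ∑ b ∈ t, ∑ a ∈ s with Q b a, g a := by
  simp_rw [sum_filter]
  rw [sum_comm]
  refine sum_le_sum fun a ha => ?_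
  have hnn : ∀ b ∈ t, 0 ≤ if Q b a then g a else 0 := fun b _ => ite_nonneg (hg a ha) le_rfl
  split_ifs with hPa
  · obtain ⟨b, hb, hQ⟩ := h a ha hPa
    exact (if_pos hQ).symm.le.trans (single_le_sum hnn hb)
  · exact sum_nonneg hnn

section RandomGraph

variable {X : Type*} [Fintype X] {f : X → ℝ}

theorem sum_filter_connected_fromRel_prod_le (hf0 : ∀ x, 0 ≤ f x) (hf1 : ∑ x, f x = 1)
    {B : X → X → Prop} [DecidableRel B] (hBsymm : ∀ x y, B x y → B y x) {p : ℝ} (hp : 0 ≤ p)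
    (hB : ∀ y, f y ≠ 0 → ∑ x with B x y, f x ≤ p) (l : ℕ) :
    ∑ ω : Fin l → X with (SimpleGraph.fromRel fun a b => B (ω a) (ω b)).Connected,
        ∏ a, f (ω a) ≤ l ^ (l - 2) * p ^ (l - 1) := by
  obtain hl | ⟨n, rfl⟩ : l < 2 ∨ ∃ n, l = n + 2 :=
    (lt_or_ge l 2).imp_right fun h => ⟨l - 2, by omega⟩
  · calc _ ≤ ∑ ω : Fin l → X, ∏ a, f (ω a) :=
          sum_le_sum_of_subset_of_nonneg (filter_subset _ _)
            fun ω _ _ => prod_nonneg fun a _ => hf0 _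
      _ = _ := by rw [sum_prod_eq_one hf1]; interval_cases l <;> simp
  calc ∑ ω : Fin (n + 2) → X with (SimpleGraph.fromRel fun a b => B (ω a) (ω b)).Connected,
          ∏ a, f (ω a)
    _ ≤ ∑ s : List.Vector (Fin (n + 2)) n,
          ∑ ω : Fin (n + 2) → X with
            ∀ e ∈ pruferDecode univ (s.toList ++ [Fin.last (n + 1)]), B (ω e.1) (ω e.2),
            ∏ a, f (ω a) := by
        refine sum_filter_le_sum_sum_filter (fun ω _ => prod_nonneg fun a _ => hf0 _) ?_
        intro ω _ hω
        obtain ⟨s, hs⟩ := hω.exists_pruferDecode_adj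
        refine ⟨s, mem_univ s, fun e he => ?_⟩
        obtain ⟨-, h | h⟩ := SimpleGraph.fromRel_adj _ _ _ |>.1 (hs e he)
        exacts [h, hBsymm _ _ h]
    _ ≤ ∑ s : List.Vector (Fin (n + 2)) n, p ^ (n + 1) := by
        refine sum_le_sum fun s _ => ?_
        have hlen : (s.toList ++ [Fin.last (n + 1)]).length = n + 1 := by simp
        have h := sum_filter_forall_mem_prod_le_pow hf0 hf1 hp hB
          (isLeafOrder_pruferDecode (A := univ) (us := s.toList ++ [Fin.last (n + 1)])
            (by simp))
        rwa [length_pruferDecode, hlen] at h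
    _ = _ := by simp

end RandomGraph

theorem Nat.choose_mul_choose_sub_comm (n a b : ℕ) :
    n.choose a * (n - a).choose b = n.choose b * (n - b).choose a := by
  have ha := Nat.choose_mul (n := n) (Nat.le_add_right a b)
  have hb := Nat.choose_mul (n := n) (Nat.le_add_left b a)
  rw [Nat.add_sub_cancel_left] at ha
  rw [Nat.add_sub_cancel] at hb
  rw [← ha, ← hb, Nat.choose_symm_add]

theorem choose_sub_div_choose_le {P k s j : ℕ} (hs : s ≤ k) (hj : j ≤ k) (hk : k ≤ P) :
    ((P - k).choose k : ℝ) / P.choose k ≤ ((P - s).choose j : ℝ) / P.choose j := by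
  have hPk : (0 : ℝ) < P.choose k := by exact_mod_cast Nat.choose_pos hk
  have hPj : (0 : ℝ) < P.choose j := by exact_mod_cast Nat.choose_pos (hj.trans hk)
  calc ((P - k).choose k : ℝ) / P.choose k
      ≤ ((P - j).choose k : ℝ) / P.choose k := by gcongr
    _ = ((P - k).choose j : ℝ) / P.choose j := by
        rw [div_eq_div_iff hPk.ne' hPj.ne']
        have h := Nat.choose_mul_choose_sub_comm P j k
        rw [mul_comm, mul_comm ((P - k).choose j : ℝ)]
        exact_mod_cast h
    _ ≤ ((P - s).choose j : ℝ) / P.choose j := by gcongr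

theorem Finset.card_filter_card_eq_and_disjoint {α : Type*} [Fintype α] [DecidableEq α]
    (S : Finset α) (k : ℕ) :
    #{T : Finset α | #T = k ∧ Disjoint T S} = (Fintype.card α - #S).choose k := by
  have : ({T : Finset α | #T = k ∧ Disjoint T S} : Finset (Finset α)) = powersetCard k Sᶜ := by
    ext T
    simp [mem_powersetCard, subset_compl_iff_disjoint_right, and_comm]
  rw [this, card_powersetCard, card_compl]

section KeyRing

variable {ι : Type*} {P : ℕ} {K : ι → ℕ} {μ : ι → ℝ}

variable (P K μ) in
noncomputable def keyRingWeight (x : ι × Finset (Fin P)) : ℝ :=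
  if #x.2 = K x.1 then μ x.1 / P.choose (K x.1) else 0

theorem keyRingWeight_nonneg (hμ : ∀ j, 0 ≤ μ j) (x : ι × Finset (Fin P)) :
    0 ≤ keyRingWeight P K μ x := by
  unfold keyRingWeight
  split_ifs
  exacts [div_nonneg (hμ _) (Nat.cast_nonneg _), le_rfl]

variable [Fintype ι]

theorem sum_filter_keyRingWeight (E : Finset (Fin P) → Prop) [DecidablePred E] :
    ∑ x with E x.2, keyRingWeight P K μ x =
      ∑ j, #{T : Finset (Fin P) | #T = K j ∧ E T} * (μ j / P.choose (K j)) := by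
  rw [sum_filter, Fintype.sum_prod_type]
  refine sum_congr rfl fun j _ => ?_
  rw [← nsmul_eq_mul, ← sum_const, sum_filter]
  refine sum_congr rfl fun T _ => ?_
  unfold keyRingWeight
  split_ifs <;> simp_all

theorem sum_keyRingWeight (hKP : ∀ j, K j ≤ P) (hμ1 : ∑ j, μ j = 1) :
    ∑ x, keyRingWeight P K μ x = 1 := by
  have h := sum_filter_keyRingWeight (P := P) (K := K) (μ := μ) fun _ => True
  simp only [filter_true, and_true] at h
  rw [h, ← hμ1]
  refine sum_congr rfl fun j _ => ?_
  rw [← powerset_univ, ← powersetCard_eq_filter, card_powersetCard, card_univ, Fintype.card_fin]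
  have : (P.choose (K j) : ℝ) ≠ 0 := by exact_mod_cast (Nat.choose_pos (hKP j)).ne'
  field_simp

theorem sum_filter_not_disjoint_keyRingWeight_le (hμ : ∀ j, 0 ≤ μ j) (hμ1 : ∑ j, μ j = 1)
    {k : ℕ} (hK : ∀ j, K j ≤ k) (hkP : k ≤ P) {S : Finset (Fin P)} (hS : #S ≤ k) :
    ∑ x with ¬ Disjoint x.2 S, keyRingWeight P K μ x ≤
      1 - ((P - k).choose k : ℝ) / P.choose k := by
  have hsplit :=
    sum_filter_add_sum_filter_not univ (fun x => Disjoint x.2 S) (keyRingWeight P K μ)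
  rw [sum_keyRingWeight (fun j => (hK j).trans hkP) hμ1] at hsplit
  suffices ((P - k).choose k : ℝ) / P.choose k ≤
      ∑ x with Disjoint x.2 S, keyRingWeight P K μ x by linarith
  rw [sum_filter_keyRingWeight fun T => Disjoint T S]
  calc ((P - k).choose k : ℝ) / P.choose k
      = ∑ j, μ j * (((P - k).choose k : ℝ) / P.choose k) := by rw [← sum_mul, hμ1, one_mul]
    _ ≤ ∑ j, μ j * (((P - #S).choose (K j) : ℝ) / P.choose (K j)) :=
        sum_le_sum fun j _ =>
          mul_le_mul_of_nonneg_left (choose_sub_div_choose_le hS (hK j) hkP) (hμ j)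
    _ = _ := by
        refine sum_congr rfl fun j _ => ?_
        rw [card_filter_card_eq_and_disjoint, Fintype.card_fin]
        ring

end KeyRing

theorem stmt17_general (l r P : ℕ) (K : Fin (r + 1) → ℕ) (μ : Fin (r + 1) → ℝ)
    (hμ : ∀ j, 0 < μ j) (hsum : ∑ j, μ j = 1)
    (hK : Monotone K) (hKP : ∀ j, 0 < K j ∧ K j ≤ P) :
    (∑ ω : Fin l → Fin (r + 1) × Finset (Fin P),
        (∏ a, if (ω a).2.card = K (ω a).1 then μ (ω a).1 / ((P.choose (K (ω a).1) : ℝ)) else 0) *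
          (if (SimpleGraph.fromRel (fun a b => ((ω a).2 ∩ (ω b).2).Nonempty)).Connected
            then 1 else 0)) ≤
      (l : ℝ) ^ (l - 2) *
        (1 - (((P - K (Fin.last r)).choose (K (Fin.last r)) : ℝ)) /
            ((P.choose (K (Fin.last r)) : ℝ))) ^ (l - 1) := by
  set p : ℝ := 1 - ((P - K (Fin.last r)).choose (K (Fin.last r)) : ℝ) /
    (P.choose (K (Fin.last r)) : ℝ) with hp_def
  have hμ0 : ∀ j, 0 ≤ μ j := fun j => (hμ j).le
  have hKlast : ∀ j, K j ≤ K (Fin.last r) := fun j => hK (Fin.le_last j)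
  have hp : 0 ≤ p := by
    rw [hp_def, sub_nonneg]
    exact div_le_one_of_le₀ (by gcongr; omega) (Nat.cast_nonneg _)
  have hedge : ∀ y, keyRingWeight P K μ y ≠ 0 →
      ∑ x with (x.2 ∩ y.2).Nonempty, keyRingWeight P K μ x ≤ p := by
    intro y hy
    have hy2 : #y.2 = K y.1 := by by_contra h; exact hy (if_neg h)
    simp_rw [← not_disjoint_iff_nonempty_inter]
    exact sum_filter_not_disjoint_keyRingWeight_le hμ0 hsum hKlast (hKP _).2 (hy2 ▸ hKlast _)
  have h := sum_filter_connected_fromRel_prod_le (B := fun x y => (x.2 ∩ y.2).Nonempty)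
    (keyRingWeight_nonneg hμ0) (sum_keyRingWeight (fun j => (hKP j).2) hsum)
    (fun x y h => by rwa [inter_comm]) hp hedge l
  rw [sum_filter] at h
  simpa only [mul_boole, keyRingWeight] using h

theorem stmt17 (l r P : ℕ) (hl : 1 ≤ l) (K : Fin (r + 1) → ℕ) (μ : Fin (r + 1) → ℝ)
    (hμ : ∀ j, 0 < μ j) (hsum : ∑ j, μ j = 1)
    (hK : Monotone K) (hKP : ∀ j, 0 < K j ∧ K j ≤ P) :
    (∑ ω : Fin l → Fin (r + 1) × Finset (Fin P),
        (∏ a, if (ω a).2.card = K (ω a).1 then μ (ω a).1 / ((P.choose (K (ω a).1) : ℝ)) else 0) *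
          (if (SimpleGraph.fromRel (fun a b => ((ω a).2 ∩ (ω b).2).Nonempty)).Connected
            then 1 else 0)) ≤
      (l : ℝ) ^ (l - 2) *
        (1 - (((P - K (Fin.last r)).choose (K (Fin.last r)) : ℝ)) /
            ((P.choose (K (Fin.last r)) : ℝ))) ^ (l - 1) :=
  stmt17_general l r P K μ hμ hsum hK hKP
end
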